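/- Under the hypotheses of the previous statement (BiHom-commutative algebra A, algebra maps ξ,ζ,ι, λ-(ξ,ξ)-derivation 𝔇, all pairwise commuting), the product a * b := ζ(a)·ι𝔇(b) makes (A, *, ζα, ιβξ) a BiHom-Novikov algebra, i.e. additionally (a * ιβξ(b)) * ζαιβξ(c) = (a * ιβξ(c)) * ζαιβξ(b) for all a,b,c. -/
import Mathlib


/-- (Left) BiHom-pre-Lie algebra `(A, c, α, β)`. -/
def BHPreLie {K A : Type*} [Field K] [AddCommGroup A] [Module K A]
    (c : A →ₗ[K] A →ₗ[K] A) (α β : A →ₗ[K] A) : Prop :=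
  (∀ a, α (β a) = β (α a)) ∧
  (∀ a b, α (c a b) = c (α a) (α b)) ∧
  (∀ a b, β (c a b) = c (β a) (β b)) ∧
  (∀ a b x, c (α (β a)) (c (α b) x) - c (c (β a) (α b)) (β x) =
    c (α (β b)) (c (α a) x) - c (c (β b) (α a)) (β x))

/-- BiHom-Novikov algebra: BiHom-pre-Lie plus `(a*β(b))*αβ(c) = (a*β(c))*αβ(b)`. -/
def BHNovikov {K A : Type*} [Field K] [AddCommGroup A] [Module K A]
    (c : A →ₗ[K] A →ₗ[K] A) (α β : A →ₗ[K] A) : Prop :=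
  BHPreLie c α β ∧
  (∀ a b x, c (c a (β b)) (α (β x)) = c (c a (β x)) (α (β b)))

/-- BiHom-pre-Lie bimodule over a BiHom-pre-Lie algebra `(A, c, α, β)`. -/
def BHPreLieBimod {K A M : Type*} [Field K] [AddCommGroup A] [Module K A]
    [AddCommGroup M] [Module K M]
    (c : A →ₗ[K] A →ₗ[K] A) (α β : A →ₗ[K] A)
    (cl : A →ₗ[K] M →ₗ[K] M) (cr : M →ₗ[K] A →ₗ[K] M)
    (αM βM : M →ₗ[K] M) : Prop :=
  (∀ m, αM (βM m) = βM (αM m)) ∧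
  (∀ a m, αM (cl a m) = cl (α a) (αM m)) ∧
  (∀ m a, αM (cr m a) = cr (αM m) (α a)) ∧
  (∀ a m, βM (cl a m) = cl (β a) (βM m)) ∧
  (∀ m a, βM (cr m a) = cr (βM m) (β a)) ∧
  (∀ a b m, cl (α (β a)) (cl (α b) m) - cl (c (β a) (α b)) (βM m) =
    cl (α (β b)) (cl (α a) m) - cl (c (β b) (α a)) (βM m)) ∧
  (∀ a m x, cl (α (β a)) (cr (αM m) x) - cr (cl (β a) (αM m)) (β x) =
    cr (αM (βM m)) (c (α a) x) - cr (cr (βM m) (α a)) (β x))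

/-- under the same hypotheses as Statement 9, the product
`a * b = ζ(a)·ι(D(b))` makes `(A, *, ζα, ιβξ)` a BiHom-Novikov algebra, i.e.
additionally `(a * ιβξ(b)) * ζαιβξ(c) = (a * ιβξ(c)) * ζαιβξ(b)`. -/
theorem stmt10 (K A : Type*) [Field K] [AddCommGroup A] [Module K A] (lam : K)
    (μ : A →ₗ[K] A →ₗ[K] A) (α β ξ ζ ι D : A →ₗ[K] A)
    -- `(A, μ, α, β)` is a BiHom-commutative BiHom-associative algebra
    (hαmul : ∀ a b, α (μ a b) = μ (α a) (α b))
    (hβmul : ∀ a b, β (μ a b) = μ (β a) (β b))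
    (hassoc : ∀ a b c, μ (α a) (μ b c) = μ (μ a b) (β c))
    (hcommut : ∀ a b, μ (β a) (α b) = μ (β b) (α a))
    -- `ξ, ζ, ι` are algebra maps
    (hξ : ∀ a b, ξ (μ a b) = μ (ξ a) (ξ b))
    (hζ : ∀ a b, ζ (μ a b) = μ (ζ a) (ζ b))
    (hι : ∀ a b, ι (μ a b) = μ (ι a) (ι b))
    -- `D` is a `lam`-`(ξ,ξ)`-derivation
    (hD : ∀ a b, D (μ a b) = μ (ξ a) (D b) + μ (D a) (ξ b) + lam • μ (ξ a) (ξ b))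
    -- any two of `α, β, ξ, ζ, ι, D` commute
    (hpair : ∀ f ∈ ([α, β, ξ, ζ, ι, D] : List (A →ₗ[K] A)),
      ∀ g ∈ ([α, β, ξ, ζ, ι, D] : List (A →ₗ[K] A)), ∀ a, f (g a) = g (f a))
    -- the new product
    (star : A →ₗ[K] A →ₗ[K] A)
    (hstar : ∀ a b, star a b = μ (ζ a) (ι (D b))) :
    BHNovikov star (ζ ∘ₗ α) (ι ∘ₗ β ∘ₗ ξ) := by

  -- extract pairwise commutation lemmas, oriented toward the canonical order
  -- α > β > ξ > ζ > ι > D (α outermost)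
  have hβα : ∀ a, β (α a) = α (β a) := hpair β (by simp) α (by simp)
  have hξα : ∀ a, ξ (α a) = α (ξ a) := hpair ξ (by simp) α (by simp)
  have hξβ : ∀ a, ξ (β a) = β (ξ a) := hpair ξ (by simp) β (by simp)
  have hζα : ∀ a, ζ (α a) = α (ζ a) := hpair ζ (by simp) α (by simp)
  have hζβ : ∀ a, ζ (β a) = β (ζ a) := hpair ζ (by simp) β (by simp)
  have hζξ : ∀ a, ζ (ξ a) = ξ (ζ a) := hpair ζ (by simp) ξ (by simp)
  have hια : ∀ a, ι (α a) = α (ι a) := hpair ι (by simp) α (by simp)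
  have hιβ : ∀ a, ι (β a) = β (ι a) := hpair ι (by simp) β (by simp)
  have hιξ : ∀ a, ι (ξ a) = ξ (ι a) := hpair ι (by simp) ξ (by simp)
  have hιζ : ∀ a, ι (ζ a) = ζ (ι a) := hpair ι (by simp) ζ (by simp)
  have hDα : ∀ a, D (α a) = α (D a) := hpair D (by simp) α (by simp)
  have hDβ : ∀ a, D (β a) = β (D a) := hpair D (by simp) β (by simp)
  have hDξ : ∀ a, D (ξ a) = ξ (D a) := hpair D (by simp) ξ (by simp)
  have hDζ : ∀ a, D (ζ a) = ζ (D a) := hpair D (by simp) ζ (by simp)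
  have hDι : ∀ a, D (ι a) = ι (D a) := hpair D (by simp) ι (by simp)
  -- key BiHom-"Novikov" identity for the original product
  have key : ∀ p q r, μ (μ p (β q)) (α (β r)) = μ (μ p (β r)) (α (β q)) := by
    intro p q r
    have h1 : μ (α p) (μ (β q) (α r)) = μ (μ p (β q)) (β (α r)) := hassoc p (β q) (α r)
    have h2 : μ (α p) (μ (β r) (α q)) = μ (μ p (β r)) (β (α q)) := hassoc p (β r) (α q)
    rw [hβα] at h1 h2
    rw [← h1, ← h2, hcommut]
  refine ⟨⟨?_, ?_, ?_, ?_⟩, ?_⟩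
  · intro a
    simp [hβα, hξα, hξβ, hζα, hζβ, hζξ, hια, hιβ, hιξ, hιζ, hDα, hDβ, hDξ, hDζ, hDι]
  · intro a b
    simp [hstar, hζ, hι, hξ, hαmul, hβmul,
      hβα, hξα, hξβ, hζα, hζβ, hζξ, hια, hιβ, hιξ, hιζ, hDα, hDβ, hDξ, hDζ, hDι]
  · intro a b
    simp [hstar, hζ, hι, hξ, hαmul, hβmul,
      hβα, hξα, hξβ, hζα, hζβ, hζξ, hια, hιβ, hιξ, hιζ, hDα, hDβ, hDξ, hDζ, hDι]
  · intro a b x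
    simp only [LinearMap.comp_apply, hstar, hζ, hι, hξ, hαmul, hβmul, hD,
      map_add, map_smul, LinearMap.add_apply, LinearMap.smul_apply,
      hβα, hξα, hξβ, hζα, hζβ, hζξ, hια, hιβ, hιξ, hιζ, hDα, hDβ, hDξ, hDζ, hDι,
      hassoc]
    rw [hcommut (ξ (ζ (ζ (ι a)))) (ξ (ζ (ζ (ι b))))]
    abel
  · intro a b x
    simp only [LinearMap.comp_apply, hstar, hζ, hι, hξ, hαmul, hβmul,
      map_add, map_smul, LinearMap.add_apply, LinearMap.smul_apply,
      hβα, hξα, hξβ, hζα, hζβ, hζξ, hια, hιβ, hιξ, hιζ, hDα, hDβ, hDξ, hDζ, hDι]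
    exact key _ _ _
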